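/- Donsker–Varadhan duality on a finite space: for any function Z : Ω → ℝ on a finite set Ω, any reference distribution μ with full support, and any τ > 0, (1/τ)·log Σ_ω μ(ω)e^{τZ(ω)} = sup_{p ∈ Δ(Ω)} { E_p[Z] − (1/τ)·KL(p‖μ) }, where KL(p‖μ) = Σ_ω p(ω)·log(p(ω)/μ(ω)). Hence the entropic risk measure arises from the KL penalty in the dual representation of convex risk measures. -/

import Mathlib

/-!
For `p` in the simplex and the Gibbs distribution `g ∝ μ e^V` one has the exact identity
`E_p[V] - KL(p‖μ) = log Σ μ e^V - KL(p‖g)`. By Gibbs' inequality `KL(p‖g) ≥ 0`, so the left side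
is maximised at `p = g`, with value `log Σ μ e^V`. Taking `V = τ Z` and dividing by `τ` gives the
theorem.
-/

open Real Finset InformationTheory

section

variable {Ω : Type*} [Fintype Ω]

theorem sum_sub_sum_le_sum_mul_log_div {p q : Ω → ℝ} (hp : ∀ ω, 0 ≤ p ω) (hq : ∀ ω, 0 < q ω) :
    ∑ ω, p ω - ∑ ω, q ω ≤ ∑ ω, p ω * log (p ω / q ω) := by
  have hterm (ω : Ω) : 0 ≤ p ω * log (p ω / q ω) + q ω - p ω := by
    have hkl : q ω * klFun (p ω / q ω) = p ω * log (p ω / q ω) + q ω - p ω := by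
      rw [klFun_apply]
      field_simp [(hq ω).ne']
    exact hkl ▸ mul_nonneg (hq ω).le (klFun_nonneg (div_nonneg (hp ω) (hq ω).le))
  have hsum := sum_nonneg fun ω (_ : ω ∈ univ) => hterm ω
  rw [sum_sub_distrib, sum_add_distrib] at hsum
  linarith

theorem mul_log_div_eq_add {a b c : ℝ} (hb : b ≠ 0) (hc : c ≠ 0) :
    a * log (a / c) = a * log (a / b) + a * log (b / c) := by
  rcases eq_or_ne a 0 with rfl | ha
  · simp
  rw [← mul_add, ← log_mul (div_ne_zero ha hb) (div_ne_zero hb hc), div_mul_div_cancel₀ hb]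

noncomputable def gibbs (μ V : Ω → ℝ) (ω : Ω) : ℝ :=
  μ ω * exp (V ω) / ∑ ω', μ ω' * exp (V ω')

section Gibbs

variable [Nonempty Ω] {μ : Ω → ℝ} (V : Ω → ℝ)

theorem sum_mul_exp_pos (hμ : ∀ ω, 0 < μ ω) : 0 < ∑ ω, μ ω * exp (V ω) :=
  sum_pos (fun ω _ => mul_pos (hμ ω) (exp_pos _)) univ_nonempty

theorem gibbs_pos (hμ : ∀ ω, 0 < μ ω) (ω : Ω) : 0 < gibbs μ V ω :=
  div_pos (mul_pos (hμ ω) (exp_pos _)) (sum_mul_exp_pos V hμ)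

theorem sum_gibbs (hμ : ∀ ω, 0 < μ ω) : ∑ ω, gibbs μ V ω = 1 := by
  simp only [gibbs]
  rw [← sum_div, div_self (sum_mul_exp_pos V hμ).ne']

theorem gibbs_mem_stdSimplex (hμ : ∀ ω, 0 < μ ω) : gibbs μ V ∈ stdSimplex ℝ Ω :=
  ⟨fun ω => (gibbs_pos V hμ ω).le, sum_gibbs V hμ⟩

theorem log_gibbs_div (hμ : ∀ ω, 0 < μ ω) (ω : Ω) :
    log (gibbs μ V ω / μ ω) = V ω - log (∑ ω, μ ω * exp (V ω)) := by
  have hratio : gibbs μ V ω / μ ω = exp (V ω) / ∑ ω, μ ω * exp (V ω) := by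
    simp only [gibbs]
    field_simp [(hμ ω).ne']
  rw [hratio, log_div (exp_ne_zero _) (sum_mul_exp_pos V hμ).ne', log_exp]

theorem sum_mul_sub_sum_mul_log_div_eq (hμ : ∀ ω, 0 < μ ω) {p : Ω → ℝ} (hp : ∑ ω, p ω = 1) :
    ∑ ω, p ω * V ω - ∑ ω, p ω * log (p ω / μ ω)
      = log (∑ ω, μ ω * exp (V ω)) - ∑ ω, p ω * log (p ω / gibbs μ V ω) := by
  have hsplit (ω : Ω) : p ω * log (p ω / μ ω)
      = p ω * log (p ω / gibbs μ V ω) + (p ω * V ω - p ω * log (∑ ω, μ ω * exp (V ω))) := by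
    rw [mul_log_div_eq_add (gibbs_pos V hμ ω).ne' (hμ ω).ne', log_gibbs_div V hμ, mul_sub]
  simp only [hsplit, sum_add_distrib, sum_sub_distrib, ← sum_mul, hp, one_mul]
  ring

theorem sum_mul_sub_sum_mul_log_div_le (hμ : ∀ ω, 0 < μ ω) {p : Ω → ℝ}
    (hp : p ∈ stdSimplex ℝ Ω) :
    ∑ ω, p ω * V ω - ∑ ω, p ω * log (p ω / μ ω) ≤ log (∑ ω, μ ω * exp (V ω)) := by
  have hkl := sum_sub_sum_le_sum_mul_log_div hp.1 (gibbs_pos V hμ)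
  rw [hp.2, sum_gibbs V hμ, sub_self] at hkl
  linarith [sum_mul_sub_sum_mul_log_div_eq V hμ hp.2]

theorem sum_gibbs_mul_sub_sum_gibbs_mul_log_div (hμ : ∀ ω, 0 < μ ω) :
    ∑ ω, gibbs μ V ω * V ω - ∑ ω, gibbs μ V ω * log (gibbs μ V ω / μ ω)
      = log (∑ ω, μ ω * exp (V ω)) := by
  simp [sum_mul_sub_sum_mul_log_div_eq V hμ (sum_gibbs V hμ), div_self (gibbs_pos V hμ _).ne']

theorem isMaxOn_gibbs (hμ : ∀ ω, 0 < μ ω) :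
    IsMaxOn (fun p : Ω → ℝ => ∑ ω, p ω * V ω - ∑ ω, p ω * log (p ω / μ ω))
      (stdSimplex ℝ Ω) (gibbs μ V) := fun _ hp =>
  (sum_mul_sub_sum_mul_log_div_le V hμ hp).trans_eq
    (sum_gibbs_mul_sub_sum_gibbs_mul_log_div V hμ).symm

theorem iSup_stdSimplex_sum_mul_sub_sum_mul_log_div (hμ : ∀ ω, 0 < μ ω) :
    ⨆ p : stdSimplex ℝ Ω, (∑ ω, p ω * V ω - ∑ ω, p ω * log (p ω / μ ω))
      = log (∑ ω, μ ω * exp (V ω)) :=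
  ((isMaxOn_gibbs V hμ).iSup_eq (gibbs_mem_stdSimplex V hμ)).trans
    (sum_gibbs_mul_sub_sum_gibbs_mul_log_div V hμ)

end Gibbs

end

theorem stmt_5_general (Ω : Type*) [Fintype Ω] [Nonempty Ω]
    (μ : Ω → ℝ) (hμpos : ∀ ω, 0 < μ ω)
    (τ : ℝ) (hτ : 0 < τ) (Z : Ω → ℝ) :
    (1 / τ) * Real.log (∑ ω, μ ω * Real.exp (τ * Z ω)) =
      ⨆ p : stdSimplex ℝ Ω,
        (∑ ω, (p : Ω → ℝ) ω * Z ω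
          - (1 / τ) * ∑ ω, (p : Ω → ℝ) ω * Real.log ((p : Ω → ℝ) ω / μ ω)) := by
  have hscale (p : Ω → ℝ) : ∑ ω, p ω * Z ω - (1 / τ) * ∑ ω, p ω * log (p ω / μ ω)
      = (1 / τ) * (∑ ω, p ω * (τ * Z ω) - ∑ ω, p ω * log (p ω / μ ω)) := by
    simp only [mul_left_comm _ τ, ← mul_sum]
    rw [mul_sub, ← mul_assoc, one_div_mul_cancel hτ.ne', one_mul]
  simp_rw [hscale, ← Real.mul_iSup_of_nonneg (one_div_pos.2 hτ).le,
    iSup_stdSimplex_sum_mul_sub_sum_mul_log_div _ hμpos]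

/-- Donsker–Varadhan duality on a finite space: the entropic risk equals the supremum of
mean minus scaled KL divergence over all distributions. -/
theorem stmt_5 (Ω : Type*) [Fintype Ω] [Nonempty Ω]
    (μ : Ω → ℝ) (hμpos : ∀ ω, 0 < μ ω) (hμ1 : ∑ ω, μ ω = 1)
    (τ : ℝ) (hτ : 0 < τ) (Z : Ω → ℝ) :
    (1 / τ) * Real.log (∑ ω, μ ω * Real.exp (τ * Z ω)) =
      ⨆ p : stdSimplex ℝ Ω,
        (∑ ω, (p : Ω → ℝ) ω * Z ω
          - (1 / τ) * ∑ ω, (p : Ω → ℝ) ω * Real.log ((p : Ω → ℝ) ω / μ ω)) :=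
  stmt_5_general Ω μ hμpos τ hτ Z
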